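/- For each fixed natural number r ≥ 0, as n → ∞, the sum over integer tuples 1 < j_1 < j_2 < ... < j_{r+1} < n of the product 1/j_1 · 1/(j_2-j_1) ··· 1/(j_{r+1}-j_r) · 1/(n-j_{r+1}) is asymptotic to (r+2)(ln n)^{r+1}/n. -/

import Mathlib

/-!
Let `A k n` be the sum over `0 < j₁ < ⋯ < j_k < n` of `1/j₁ · 1/(j₂-j₁) ⋯ 1/(n-j_k)`, the
`(k+1)`-fold additive convolution power of `n ↦ 1/n`. The sum of the theorem is `A (r+1) n`
without its terms with `j₁ = 1`, and these add up to `A r (n-1)`.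

Since the `k+2` gaps `j₁, j₂ - j₁, …, n - j_{k+1}` add up to `n`, multiplying `A (k+1) n` by `n`
and cancelling one gap at a time gives `n · A (k+1) n = (k+2) ∑_{m<n} A k m`. Together with the
sum–integral comparison `∑_{m<n} (log m)^k/m ~ (log n)^{k+1}/(k+1)`, induction on `k` yields
`A k n ~ (k+1)(log n)^k/n`. Hence `A (r+1) n ~ (r+2)(log n)^{r+1}/n`, while
`A r (n-1) = O((log n)^r/n)` is negligible.
-/

open Asymptotics Filter Finset Real

theorem Asymptotics.IsEquivalent.sum_range {f g : ℕ → ℝ} (h : f ~[atTop] g) (hg : 0 ≤ g)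
    (h'g : Tendsto (fun n ↦ ∑ i ∈ range n, g i) atTop atTop) :
    (fun n ↦ ∑ i ∈ range n, f i) ~[atTop] fun n ↦ ∑ i ∈ range n, g i := by
  simpa only [IsEquivalent, Pi.sub_def, ← sum_sub_distrib] using h.isLittleO.sum_range hg h'g

theorem AntitoneOn.isEquivalent_sum_range {f F : ℝ → ℝ} {N : ℕ} (hf : AntitoneOn f (Set.Ici N))
    (hf0 : ∀ x ≥ (N : ℝ), 0 ≤ f x) (hF : ∀ x ≥ (N : ℝ), HasDerivAt F (f x) x)
    (hFtop : Tendsto F atTop atTop) :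
    (fun n : ℕ ↦ ∑ m ∈ range n, f m) ~[atTop] fun n : ℕ ↦ F n := by
  have hbound : ∀ n ≥ N, |∑ m ∈ range n, f m - F n| ≤ |∑ m ∈ range N, f m - F N| + f N := by
    intro n hn
    have hNn : (N : ℝ) ≤ n := by exact_mod_cast hn
    have hfI : AntitoneOn f (Set.Icc N n) := hf.mono Set.Icc_subset_Ici_self
    have hint : ∫ x in (N : ℝ)..n, f x = F n - F N := by
      refine intervalIntegral.integral_eq_sub_of_hasDerivAt (fun x hx ↦ hF x ?_) ?_
      · exact (Set.uIcc_of_le hNn ▸ hx).1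
      · exact AntitoneOn.intervalIntegrable (Set.uIcc_of_le hNn ▸ hfI)
    have hlow := hfI.integral_le_sum_Ico hn
    have hup := hfI.sum_le_integral_Ico hn
    have htele : ∑ i ∈ Ico N n, (f ↑(i + 1) - f i) = f n - f N := sum_Ico_sub (fun i : ℕ ↦ f i) hn
    rw [sum_sub_distrib] at htele
    have hfn := hf0 n hNn
    have := neg_abs_le (∑ m ∈ range N, f m - F N)
    have := le_abs_self (∑ m ∈ range N, f m - F N)
    rw [← sum_range_add_sum_Ico _ hn, abs_le]
    constructor <;> linarith
  refine IsLittleO.isEquivalent (IsBigO.trans_isLittleO (g := fun _ ↦ (1 : ℝ)) ?_ ?_)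
  · refine IsBigO.of_bound (|∑ m ∈ range N, f m - F N| + f N) ?_
    filter_upwards [eventually_ge_atTop N] with n hn
    simpa using hbound n hn
  · exact isLittleO_const_left.2
      (Or.inr (tendsto_norm_atTop_atTop.comp (hFtop.comp tendsto_natCast_atTop_atTop)))

theorem antitoneOn_log_pow_div_self (j : ℕ) :
    AntitoneOn (fun x : ℝ ↦ log x ^ j / x) (Set.Ici (exp j)) := by
  intro x hx y hy hxy
  have hx0 : 0 < x := (exp_pos j).trans_le hx
  rcases j with _ | k
  · simpa using inv_anti₀ hx0 hxy
  · have hpow : ∀ z > 0, log z ^ (k + 1) / z = (log z / z ^ ((k + 1 : ℝ)⁻¹)) ^ (k + 1) := by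
      intro z hz
      rw [div_pow, ← rpow_natCast (z ^ _), ← rpow_mul hz.le]
      push_cast
      rw [inv_mul_cancel₀ (by positivity), rpow_one]
    have hanti := log_div_self_rpow_antitoneOn (a := (k + 1 : ℝ)⁻¹) (by positivity)
    rw [inv_inv] at hanti
    push_cast at hx hy
    have hy0 : 0 < y := hx0.trans_le hxy
    have hlog : 0 ≤ log y / y ^ ((k + 1 : ℝ)⁻¹) :=
      div_nonneg (log_nonneg ((one_le_exp (by positivity)).trans hy)) (by positivity)
    simp only [hpow x hx0, hpow y hy0]
    exact pow_le_pow_left₀ hlog (hanti hx hy hxy) _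

theorem hasDerivAt_log_pow_succ_div (j : ℕ) {x : ℝ} (hx : x ≠ 0) :
    HasDerivAt (fun y ↦ log y ^ (j + 1) / (j + 1)) (log x ^ j / x) x := by
  refine (((hasDerivAt_log hx).fun_pow (j + 1)).div_const _).congr_deriv ?_
  push_cast
  field_simp

theorem tendsto_log_pow_succ_div_atTop (j : ℕ) :
    Tendsto (fun x : ℝ ↦ log x ^ (j + 1) / (j + 1)) atTop atTop :=
  ((tendsto_pow_atTop j.succ_ne_zero).comp tendsto_log_atTop).atTop_div_const (by positivity)

theorem isEquivalent_sum_range_log_pow_div (j : ℕ) :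
    (fun n : ℕ ↦ ∑ m ∈ range n, log m ^ j / m) ~[atTop]
      fun n : ℕ ↦ log n ^ (j + 1) / (j + 1) := by
  have hN : exp j ≤ (⌈exp j⌉₊ : ℝ) := Nat.le_ceil _
  have hpos : ∀ x ≥ (⌈exp j⌉₊ : ℝ), 1 ≤ x := fun x hx ↦
    (one_le_exp (Nat.cast_nonneg j)).trans (hN.trans hx)
  exact AntitoneOn.isEquivalent_sum_range (N := ⌈exp j⌉₊)
    ((antitoneOn_log_pow_div_self j).mono (Set.Ici_subset_Ici.2 hN))
    (fun x hx ↦ div_nonneg (pow_nonneg (log_nonneg (hpos x hx)) _) (by linarith [hpos x hx]))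
    (fun x hx ↦ hasDerivAt_log_pow_succ_div j (by linarith [hpos x hx]))
    (tendsto_log_pow_succ_div_atTop j)

theorem isBigO_log_pow_div_pred (k : ℕ) :
    (fun n : ℕ ↦ log ↑(n - 1) ^ k / ↑(n - 1)) =O[atTop] fun n : ℕ ↦ log n ^ k / n := by
  refine IsBigO.of_bound 2 ?_
  filter_upwards [eventually_ge_atTop 2] with n hn
  have h1 : (1 : ℝ) ≤ ↑(n - 1) := by exact_mod_cast (by omega : 1 ≤ n - 1)
  have h2 : (↑(n - 1) : ℝ) ≤ n := by exact_mod_cast n.sub_le 1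
  have h3 : (n : ℝ) ≤ 2 * ↑(n - 1) := by exact_mod_cast (by omega : n ≤ 2 * (n - 1))
  rw [norm_of_nonneg (by positivity), norm_of_nonneg (by positivity)]
  calc log ↑(n - 1) ^ k / ↑(n - 1) ≤ log n ^ k / (n / 2) := by
        gcongr
        linarith
    _ = 2 * (log n ^ k / n) := by ring

theorem isLittleO_log_pow_div_log_pow_succ_div (k : ℕ) :
    (fun n : ℕ ↦ log n ^ k / n) =o[atTop] fun n : ℕ ↦ log n ^ (k + 1) / n := by
  have hlog : (fun _ : ℕ ↦ (1 : ℝ)) =o[atTop] fun n : ℕ ↦ log n :=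
    isLittleO_const_left.2 <| Or.inr <|
      tendsto_norm_atTop_atTop.comp (tendsto_log_atTop.comp tendsto_natCast_atTop_atTop)
  simpa [pow_succ, mul_div_assoc, mul_comm] using
    hlog.mul_isBigO (isBigO_refl (fun n : ℕ ↦ log n ^ k / n) atTop)

/-- `∑_{0 < j₁ < ⋯ < j_k < n} 1/j₁ · 1/(j₂-j₁) ⋯ 1/(n-j_k)`, as the `(k+1)`-fold additive
convolution power of `n ↦ 1/n`; it vanishes at `n = 0` because `1/0 = 0`. -/
noncomputable def harmonicConv : ℕ → ℕ → ℝ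
  | 0, n => 1 / (n : ℝ)
  | k + 1, n => ∑ m ∈ Ioo 0 n, harmonicConv k m / ((n : ℝ) - m)

theorem harmonicConv_succ (k n : ℕ) :
    harmonicConv (k + 1) n = ∑ m ∈ Ioo 0 n, harmonicConv k m / ((n : ℝ) - m) := rfl

@[simp] theorem harmonicConv_zero_right (k : ℕ) : harmonicConv k 0 = 0 := by
  cases k <;> simp [harmonicConv]

theorem sum_Ioo_comp_sub_comm {M : Type*} [AddCommMonoid M] (g : ℝ → M) (l n : ℕ) :
    ∑ m ∈ Ioo l n, g ((n : ℝ) - m) = ∑ m ∈ Ioo l n, g ((m : ℝ) - l) := by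
  refine sum_nbij' (fun m ↦ n + l - m) (fun m ↦ n + l - m) ?_ ?_ ?_ ?_ ?_ <;>
    intro m hm <;> simp only [mem_Ioo] at hm ⊢ <;> try omega
  rw [Nat.cast_sub (by omega)]
  push_cast
  congr 1
  ring

theorem sum_Ioo_sum_Ioo_div_sub (f : ℕ → ℝ) (n : ℕ) :
    ∑ m ∈ Ioo 0 n, (∑ l ∈ Ioo 0 m, f l) / ((n : ℝ) - m) =
      ∑ m ∈ Ioo 0 n, ∑ l ∈ Ioo 0 m, f l / ((m : ℝ) - l) := by
  have hswap : ∀ (F : ℕ → ℕ → ℝ), ∑ m ∈ Ioo 0 n, ∑ l ∈ Ioo 0 m, F l m =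
      ∑ l ∈ Ioo 0 n, ∑ m ∈ Ioo l n, F l m := fun F ↦
    sum_comm' fun m l ↦ by simp only [mem_Ioo]; omega
  simp_rw [sum_div, hswap, div_eq_mul_one_div (f _), ← mul_sum]
  congr! 2 with l
  exact sum_Ioo_comp_sub_comm (fun x ↦ 1 / x) l n

theorem natCast_mul_harmonicConv_succ (k n : ℕ) :
    n * harmonicConv (k + 1) n = (k + 2) * ∑ m ∈ Ioo 0 n, harmonicConv k m := by
  induction k generalizing n with
  | zero =>
    have hterm : ∀ m ∈ Ioo 0 n,
        (n : ℝ) * (harmonicConv 0 m / (n - m)) = 1 / m + 1 / ((n : ℝ) - m) := by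
      intro m hm
      have : (n : ℝ) - m ≠ 0 := sub_ne_zero.2 (by exact_mod_cast (mem_Ioo.1 hm).2.ne')
      have : (m : ℝ) ≠ 0 := by exact_mod_cast (mem_Ioo.1 hm).1.ne'
      simp only [harmonicConv]
      field_simp
      ring
    rw [harmonicConv_succ, mul_sum, sum_congr rfl hterm, sum_add_distrib,
      sum_Ioo_comp_sub_comm (fun x ↦ 1 / x) 0 n]
    simp only [harmonicConv, Nat.cast_zero, sub_zero]
    ring
  | succ k ih =>
    have hterm : ∀ m ∈ Ioo 0 n, (n : ℝ) * (harmonicConv (k + 1) m / (n - m)) =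
        (k + 2) * ((∑ l ∈ Ioo 0 m, harmonicConv k l) / (n - m)) + harmonicConv (k + 1) m := by
      intro m hm
      have : (n : ℝ) - m ≠ 0 := sub_ne_zero.2 (by exact_mod_cast (mem_Ioo.1 hm).2.ne')
      rw [← mul_div_assoc ((k : ℝ) + 2), ← ih m]
      field_simp
      ring
    rw [harmonicConv_succ, mul_sum, sum_congr rfl hterm, sum_add_distrib, ← mul_sum,
      sum_Ioo_sum_Ioo_div_sub]
    simp only [← harmonicConv_succ]
    push_cast
    ring

theorem sum_Ioo_zero_eq_sum_range {M : Type*} [AddCommMonoid M] {f : ℕ → M} (hf : f 0 = 0)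
    (n : ℕ) : ∑ m ∈ Ioo 0 n, f m = ∑ m ∈ range n, f m :=
  sum_subset (fun m hm ↦ mem_range.2 (mem_Ioo.1 hm).2) fun m hm hm' ↦ by
    obtain rfl : m = 0 := by simp only [mem_Ioo, mem_range] at hm hm'; omega
    exact hf

theorem isEquivalent_harmonicConv (k : ℕ) :
    (fun n : ℕ ↦ harmonicConv k n) ~[atTop] fun n : ℕ ↦ (k + 1) * (log n ^ k / n) := by
  induction k with
  | zero => exact IsEquivalent.refl.congr_right (.of_eq (by ext; simp [harmonicConv]))
  | succ k ih =>
    have hlog := isEquivalent_sum_range_log_pow_div k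
    have hsum : (fun n : ℕ ↦ ∑ m ∈ Ioo 0 n, harmonicConv k m) ~[atTop]
        fun n : ℕ ↦ (k + 1) * (log n ^ (k + 1) / (k + 1)) := by
      simp only [sum_Ioo_zero_eq_sum_range (harmonicConv_zero_right k)]
      refine (ih.sum_range (fun m ↦ ?_) ?_).trans ?_
      · positivity
      · simp only [← mul_sum]
        exact (hlog.symm.tendsto_atTop ((tendsto_log_pow_succ_div_atTop k).comp
          tendsto_natCast_atTop_atTop)).const_mul_atTop (by positivity)
      · simp only [← mul_sum]
        exact IsEquivalent.refl.mul hlog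
    refine ((IsEquivalent.refl (u := fun n : ℕ ↦ (k + 2 : ℝ) / n)).mul hsum).congr_left ?_
      |>.congr_right ?_
    · filter_upwards [eventually_ne_atTop 0] with n hn
      have hn : (n : ℝ) ≠ 0 := by exact_mod_cast hn
      simp only [Pi.mul_apply]
      rw [div_mul_eq_mul_div, ← natCast_mul_harmonicConv_succ]
      field_simp
    · refine .of_eq (funext fun n ↦ ?_)
      simp only [Pi.mul_apply]
      push_cast
      field_simp
      ring

theorem isLittleO_harmonicConv_pred (k : ℕ) :
    (fun n : ℕ ↦ harmonicConv k (n - 1)) =o[atTop] fun n : ℕ ↦ log n ^ (k + 1) / n :=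
  have hO : (fun n : ℕ ↦ harmonicConv k n) =O[atTop] fun n : ℕ ↦ log n ^ k / n :=
    (isEquivalent_harmonicConv k).isBigO.trans (isBigO_const_mul_self _ _ _)
  ((hO.comp_tendsto (tendsto_sub_atTop_nat 1)).trans (isBigO_log_pow_div_pred k)).trans_isLittleO
    (isLittleO_log_pow_div_log_pow_succ_div k)

theorem Fin.strictMono_snoc {α : Type*} [Preorder α] {n : ℕ} {f : Fin n → α} {a : α} :
    StrictMono (Fin.snoc f a : Fin (n + 1) → α) ↔ StrictMono f ∧ ∀ i, f i < a := by
  simp [← Fin.insertNth_last', Fin.strictMono_insertNth_iff, Fin.castSucc_lt_last,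
    not_le.2 (Fin.castSucc_lt_last _)]

theorem sum_filter_strictMono_piFinset_Ioo_succ {α M : Type*} [Preorder α] [DecidableLT α]
    [LocallyFiniteOrder α] [AddCommMonoid M] {r : ℕ} (φ : (Fin (r + 1) → α) → M) (a b : α) :
    ∑ j ∈ (Fintype.piFinset fun _ : Fin (r + 1) ↦ Ioo a b).filter StrictMono, φ j =
      ∑ m ∈ Ioo a b, ∑ j ∈ (Fintype.piFinset fun _ : Fin r ↦ Ioo a m).filter StrictMono,
        φ (Fin.snoc j m) := by
  rw [sum_sigma']
  symm
  refine sum_nbij' (fun p : (_ : α) × (Fin r → α) ↦ Fin.snoc p.2 p.1)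
    (fun j : Fin (r + 1) → α ↦ ⟨j (Fin.last r), Fin.init j⟩) ?_ ?_ ?_ ?_ fun _ _ ↦ rfl
  · rintro ⟨m, j⟩
    simp only [mem_sigma, mem_filter, Fintype.mem_piFinset, mem_Ioo, Fin.forall_fin_succ',
      Fin.snoc_castSucc, Fin.snoc_last, Fin.strictMono_snoc]
    exact fun ⟨hm, hj, hmono⟩ ↦
      ⟨⟨fun i ↦ ⟨(hj i).1, (hj i).2.trans hm.2⟩, hm⟩, hmono, fun i ↦ (hj i).2⟩
  · intro j
    simp only [mem_sigma, mem_filter, Fintype.mem_piFinset, mem_Ioo, Fin.forall_fin_succ']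
    exact fun ⟨⟨hj, hlast⟩, hmono⟩ ↦ ⟨hlast, fun i ↦ ⟨(hj i).1, hmono (Fin.castSucc_lt_last i)⟩,
      hmono.comp Fin.strictMono_castSucc⟩
  · rintro ⟨m, j⟩ -
    simp
  · rintro j -
    exact Fin.snoc_init_self j

noncomputable def nestedSum (r n : ℕ) : ℝ :=
  ∑ j ∈ (Fintype.piFinset fun _ : Fin (r + 1) ↦ Ioo 1 n).filter StrictMono,
    (1 / (j 0 : ℝ)) * (∏ i : Fin r, 1 / ((j i.succ : ℝ) - (j i.castSucc : ℝ)))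
      * (1 / ((n : ℝ) - (j (Fin.last r) : ℝ)))

theorem nestedSum_zero (n : ℕ) :
    nestedSum 0 n = ∑ m ∈ Ioo 1 n, harmonicConv 0 m / ((n : ℝ) - m) := by
  rw [nestedSum, sum_filter_strictMono_piFinset_Ioo_succ]
  refine sum_congr rfl fun m _ ↦ ?_
  rw [← Fin.last_zero]
  simp only [Subsingleton.strictMono, filter_true, Fintype.piFinset_of_isEmpty, univ_unique,
    sum_singleton, Fin.prod_univ_zero, mul_one, Fin.snoc_last, harmonicConv]
  ring

theorem nestedSum_succ (r n : ℕ) :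
    nestedSum (r + 1) n = ∑ m ∈ Ioo 1 n, nestedSum r m / ((n : ℝ) - m) := by
  rw [nestedSum, sum_filter_strictMono_piFinset_Ioo_succ]
  refine sum_congr rfl fun m _ ↦ ?_
  rw [nestedSum, sum_div]
  refine sum_congr rfl fun j _ ↦ ?_
  simp only [Fin.prod_univ_castSucc, Fin.snoc_castSucc, Fin.succ_castSucc, Fin.succ_last,
    Fin.snoc_last]
  rw [← Fin.castSucc_zero, Fin.snoc_castSucc]
  ring

theorem sum_Ioo_one_harmonicConv_div_sub (k : ℕ) {n : ℕ} (hn : 1 < n) :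
    ∑ m ∈ Ioo 1 n, harmonicConv k m / ((n : ℝ) - m) =
      harmonicConv (k + 1) n - harmonicConv k 1 / ((n : ℝ) - 1) := by
  have hIoo : Ioo 0 n = insert 1 (Ioo 1 n) := by
    ext m
    simp only [mem_Ioo, mem_insert]
    omega
  rw [harmonicConv_succ, hIoo, sum_insert left_notMem_Ioo]
  push_cast
  ring

theorem sum_Ioo_one_harmonicConv_pred_div_sub (k n : ℕ) :
    ∑ m ∈ Ioo 1 n, harmonicConv k (m - 1) / ((n : ℝ) - m) = harmonicConv (k + 1) (n - 1) := by
  rcases n with _ | n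
  · simp
  · rw [Nat.add_sub_cancel, harmonicConv_succ,
      show Ioo 1 (n + 1) = (Ioo 0 n).map (addRightEmbedding 1) from (map_add_right_Ioo 0 n 1).symm,
      sum_map]
    push_cast [addRightEmbedding_apply, Nat.add_sub_cancel, add_sub_add_right_eq_sub]
    rfl

theorem nestedSum_eq_harmonicConv_sub {r n : ℕ} (hn : 1 < n) :
    nestedSum r n = harmonicConv (r + 1) n - harmonicConv r (n - 1) := by
  induction r generalizing n with
  | zero =>
    rw [nestedSum_zero, sum_Ioo_one_harmonicConv_div_sub 0 hn]
    simp [harmonicConv, Nat.cast_sub hn.le]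
  | succ r ih =>
    rw [nestedSum_succ, sum_congr rfl fun m hm ↦ by rw [ih (mem_Ioo.1 hm).1]]
    have hone : harmonicConv (r + 1) 1 = 0 := by
      rw [harmonicConv_succ, show Ioo 0 1 = ∅ from rfl, sum_empty]
    simp only [sub_div, sum_sub_distrib, sum_Ioo_one_harmonicConv_div_sub _ hn,
      sum_Ioo_one_harmonicConv_pred_div_sub, hone]
    ring

open Classical in
/-- For fixed `r`, the sum over `1 < j₁ < ⋯ < j_{r+1} < n` of
`1/j₁ · 1/(j₂-j₁) ⋯ 1/(j_{r+1}-j_r) · 1/(n-j_{r+1})` is `~ (r+2)(ln n)^{r+1}/n`. -/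
theorem nested_sum_asymptotic (r : ℕ) :
    (fun n : ℕ =>
      ∑ j ∈ (Fintype.piFinset fun _ : Fin (r + 1) => Finset.Ioo 1 n).filter StrictMono,
        (1 / (j 0 : ℝ)) * (∏ i : Fin r, 1 / ((j i.succ : ℝ) - (j i.castSucc : ℝ)))
          * (1 / ((n : ℝ) - (j (Fin.last r) : ℝ))))
      ~[atTop]
    (fun n : ℕ => ((r : ℝ) + 2) * (Real.log n) ^ (r + 1) / (n : ℝ)) := by
  change (fun n ↦ nestedSum r n) ~[atTop] _
  have hmain := isEquivalent_harmonicConv (r + 1)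
  have hrem := (isLittleO_harmonicConv_pred r).trans_isBigO
    (isBigO_self_const_mul (c := ((r + 1 : ℕ) : ℝ) + 1) (by positivity) _ atTop)
  refine ((hmain.sub_isLittleO hrem).congr_left ?_).congr_right ?_
  · filter_upwards [eventually_gt_atTop 1] with n hn
    exact (nestedSum_eq_harmonicConv_sub hn).symm
  · refine .of_eq (funext fun n ↦ ?_)
    push_cast
    ring
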